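/- Let J be a symmetric matrix on ℝ^d with δ·Id ⪯ J ⪯ (1−δ)·Id for some δ ∈ (0, 1/2), and let h ∈ ℝ^d. Define p(x) ∝ exp(−(1/2)xᵀJ⁻¹x + hᵀJ⁻¹x)·∏_{i=1}^d (e^{x_i} + e^{-x_i}). Then for all x ∈ ℝ^d, (δ/(1−δ))·Id ⪯ −∇²log p(x) ⪯ (1/δ)·Id. In particular p is strongly log-concave and log-smooth. -/

import Mathlib

open Matrix

/-- Cauchy–Schwarz for a positive semidefinite symmetric bilinear form. -/
lemma cs_psd {d : ℕ} (M : Matrix (Fin d) (Fin d) ℝ)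
    (hsym : ∀ a b : Fin d → ℝ, a ⬝ᵥ M *ᵥ b = b ⬝ᵥ M *ᵥ a)
    (hpsd : ∀ z : Fin d → ℝ, 0 ≤ z ⬝ᵥ M *ᵥ z)
    (a b : Fin d → ℝ) :
    (a ⬝ᵥ M *ᵥ b) ^ 2 ≤ (a ⬝ᵥ M *ᵥ a) * (b ⬝ᵥ M *ᵥ b) := by
  have key : ∀ t : ℝ,
      0 ≤ (b ⬝ᵥ M *ᵥ b) * (t * t) + (2 * (a ⬝ᵥ M *ᵥ b)) * t + (a ⬝ᵥ M *ᵥ a) := by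
    intro t
    have h := hpsd (a + t • b)
    simp only [mulVec_add, mulVec_smul, dotProduct_add, add_dotProduct,
      dotProduct_smul, smul_dotProduct, smul_eq_mul] at h
    rw [hsym b a] at h
    nlinarith [h]
  have hd := discrim_le_zero key
  rw [discrim] at hd
  nlinarith [hd]

/-- Second derivative of the one-dimensional restriction. -/
lemma second_deriv_aux {d : ℕ} (x v : Fin d → ℝ) (c0 c1 c2 : ℝ) :
    deriv (deriv (fun t : ℝ => c0 + c1 * t + c2 * t ^ 2 +
      ∑ i, (Real.log 2 + Real.log (Real.cosh (x i + t * v i))))) 0 =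
    2 * c2 + ∑ i, (v i) ^ 2 / Real.cosh (x i) ^ 2 := by
  have hu : ∀ (i : Fin d) (t : ℝ), HasDerivAt (fun s : ℝ => x i + s * v i) (v i) t := by
    intro i t
    simpa using ((hasDerivAt_id t).mul_const (v i)).const_add (x i)
  have h1 : ∀ t : ℝ, HasDerivAt (fun s : ℝ => c0 + c1 * s + c2 * s ^ 2 +
      ∑ i, (Real.log 2 + Real.log (Real.cosh (x i + s * v i))))
      (c1 + 2 * c2 * t +
        ∑ i, v i * Real.sinh (x i + t * v i) / Real.cosh (x i + t * v i)) t := by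
    intro t
    have hp : HasDerivAt (fun s : ℝ => c0 + c1 * s + c2 * s ^ 2) (c1 + 2 * c2 * t) t := by
      have h := ((hasDerivAt_const t c0).add ((hasDerivAt_id t).const_mul c1)).add
        ((hasDerivAt_pow 2 t).const_mul c2)
      refine h.congr_deriv ?_
      push_cast
      ring
    have hs : HasDerivAt
        (fun s : ℝ => ∑ i, (Real.log 2 + Real.log (Real.cosh (x i + s * v i))))
        (∑ i, v i * Real.sinh (x i + t * v i) / Real.cosh (x i + t * v i)) t := by
      apply HasDerivAt.fun_sum
      intro i _
      have hcosh : HasDerivAt (fun s : ℝ => Real.cosh (x i + s * v i))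
          (Real.sinh (x i + t * v i) * v i) t := (hu i t).cosh
      have hlog := hcosh.log (Real.cosh_pos _).ne'
      have h := (hasDerivAt_const t (Real.log 2)).add hlog
      refine h.congr_deriv ?_
      field_simp
      ring
    exact hp.add hs
  have hd1 : deriv (fun t : ℝ => c0 + c1 * t + c2 * t ^ 2 +
      ∑ i, (Real.log 2 + Real.log (Real.cosh (x i + t * v i)))) =
      fun t => c1 + 2 * c2 * t +
        ∑ i, v i * Real.sinh (x i + t * v i) / Real.cosh (x i + t * v i) :=
    funext fun t => (h1 t).deriv
  rw [hd1]
  have h2 : HasDerivAt (fun t : ℝ => c1 + 2 * c2 * t +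
      ∑ i, v i * Real.sinh (x i + t * v i) / Real.cosh (x i + t * v i))
      (2 * c2 + ∑ i, (v i) ^ 2 / Real.cosh (x i) ^ 2) 0 := by
    have hp2 : HasDerivAt (fun t : ℝ => c1 + 2 * c2 * t) (2 * c2) 0 := by
      have h := (hasDerivAt_const (0 : ℝ) c1).add ((hasDerivAt_id (0 : ℝ)).const_mul (2 * c2))
      refine h.congr_deriv ?_
      ring
    have hs2 : HasDerivAt
        (fun t : ℝ => ∑ i, v i * Real.sinh (x i + t * v i) / Real.cosh (x i + t * v i))
        (∑ i, (v i) ^ 2 / Real.cosh (x i) ^ 2) 0 := by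
      apply HasDerivAt.fun_sum
      intro i _
      have hN : HasDerivAt (fun s : ℝ => v i * Real.sinh (x i + s * v i))
          (v i * (Real.cosh (x i + 0 * v i) * v i)) 0 := ((hu i 0).sinh).const_mul (v i)
      have hD : HasDerivAt (fun s : ℝ => Real.cosh (x i + s * v i))
          (Real.sinh (x i + 0 * v i) * v i) 0 := (hu i 0).cosh
      have hdiv := hN.div hD (Real.cosh_pos _).ne'
      simp only [zero_mul, add_zero] at hdiv
      have hnum : v i * (Real.cosh (x i) * v i) * Real.cosh (x i) -
          v i * Real.sinh (x i) * (Real.sinh (x i) * v i) = (v i) ^ 2 := by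
        linear_combination (v i) ^ 2 * Real.cosh_sq (x i)
      rw [hnum] at hdiv
      exact hdiv
    exact hp2.add hs2
  exact h2.deriv

/-- Log-density (up to additive normalizing constant) of the Hubbard–Stratonovich
mixture `p(x) ∝ exp(-½ xᵀJ⁻¹x + hᵀJ⁻¹x) · ∏ᵢ (e^{xᵢ} + e^{-xᵢ})`. -/
noncomputable def hsLogDensity (d : ℕ) (J : Matrix (Fin d) (Fin d) ℝ) (h : Fin d → ℝ)
    (x : Fin d → ℝ) : ℝ :=
  -(1 / 2) * (x ⬝ᵥ (J⁻¹ *ᵥ x)) + h ⬝ᵥ (J⁻¹ *ᵥ x) +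
    ∑ i, Real.log (Real.exp (x i) + Real.exp (-(x i)))

/-- If `δ·Id ⪯ J ⪯ (1-δ)·Id` with `δ ∈ (0,1/2)`, then
`(δ/(1-δ))·Id ⪯ -∇²log p(x) ⪯ (1/δ)·Id`, expressed through second directional
derivatives of `log p` along arbitrary directions `v`. -/
theorem hs_mixture_log_smooth_log_concave (d : ℕ)
    (J : Matrix (Fin d) (Fin d) ℝ) (h : Fin d → ℝ)
    (δ : ℝ) (hδ : δ ∈ Set.Ioo (0 : ℝ) (1 / 2)) (hJsymm : J.IsSymm)
    (hJlow : (J - δ • (1 : Matrix (Fin d) (Fin d) ℝ)).PosSemidef)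
    (hJhigh : ((1 - δ) • (1 : Matrix (Fin d) (Fin d) ℝ) - J).PosSemidef) :
    ∀ x v : Fin d → ℝ,
      (δ / (1 - δ)) * (v ⬝ᵥ v) ≤
        -(deriv (deriv (fun t : ℝ => hsLogDensity d J h (x + t • v))) 0) ∧
      -(deriv (deriv (fun t : ℝ => hsLogDensity d J h (x + t • v))) 0) ≤
        (1 / δ) * (v ⬝ᵥ v) := by
  obtain ⟨hδ0, hδhalf⟩ := hδ
  have h1δ : 0 < 1 - δ := by linarith
  intro x v
  -- rewrite the restricted log-density as quadratic + log-cosh sum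
  have hrw : (fun t : ℝ => hsLogDensity d J h (x + t • v)) =
      fun t : ℝ => (-(1 / 2) * (x ⬝ᵥ J⁻¹ *ᵥ x) + h ⬝ᵥ J⁻¹ *ᵥ x) +
        (-(1 / 2) * (x ⬝ᵥ J⁻¹ *ᵥ v + v ⬝ᵥ J⁻¹ *ᵥ x) + h ⬝ᵥ J⁻¹ *ᵥ v) * t +
        (-(1 / 2) * (v ⬝ᵥ J⁻¹ *ᵥ v)) * t ^ 2 +
        ∑ i, (Real.log 2 + Real.log (Real.cosh (x i + t * v i))) := by
    funext t
    unfold hsLogDensity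
    have hmv : J⁻¹ *ᵥ (x + t • v) = J⁻¹ *ᵥ x + t • (J⁻¹ *ᵥ v) := by
      rw [mulVec_add, mulVec_smul]
    have hsum : ∀ i : Fin d,
        Real.log (Real.exp ((x + t • v) i) + Real.exp (-((x + t • v) i))) =
          Real.log 2 + Real.log (Real.cosh (x i + t * v i)) := by
      intro i
      have hxi : (x + t • v) i = x i + t * v i := rfl
      rw [hxi, show Real.exp (x i + t * v i) + Real.exp (-(x i + t * v i)) =
          2 * Real.cosh (x i + t * v i) by rw [Real.cosh_eq]; ring,
        Real.log_mul two_ne_zero (Real.cosh_pos _).ne']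
    rw [Finset.sum_congr rfl fun i _ => hsum i, hmv]
    simp only [dotProduct_add, add_dotProduct, dotProduct_smul, smul_dotProduct, smul_eq_mul]
    ring
  rw [hrw, second_deriv_aux]
  have hval : -(2 * (-(1 / 2) * (v ⬝ᵥ J⁻¹ *ᵥ v)) + ∑ i, v i ^ 2 / Real.cosh (x i) ^ 2) =
      (v ⬝ᵥ J⁻¹ *ᵥ v) - ∑ i, v i ^ 2 / Real.cosh (x i) ^ 2 := by ring
  rw [hval]
  set Q := v ⬝ᵥ J⁻¹ *ᵥ v with hQdef
  set S := ∑ i, v i ^ 2 / Real.cosh (x i) ^ 2 with hSdef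
  set P := v ⬝ᵥ v with hPdef
  -- basic facts about S
  have hS0 : 0 ≤ S := by
    apply Finset.sum_nonneg
    intro i _
    exact div_nonneg (sq_nonneg _) (sq_nonneg _)
  have hSP : S ≤ P := by
    rw [hSdef, hPdef]
    have : v ⬝ᵥ v = ∑ i, v i ^ 2 := by
      simp [dotProduct, sq]
    rw [this]
    apply Finset.sum_le_sum
    intro i _
    have hc : (1 : ℝ) ≤ Real.cosh (x i) ^ 2 := by
      nlinarith [Real.one_le_cosh (x i)]
    calc v i ^ 2 / Real.cosh (x i) ^ 2 ≤ v i ^ 2 / 1 :=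
          div_le_div_of_nonneg_left (sq_nonneg _) one_pos hc
      _ = v i ^ 2 := div_one _
  have hP0 : 0 ≤ P := by
    rw [hPdef]
    exact Finset.sum_nonneg fun i _ => mul_self_nonneg _
  -- symmetry of the bilinear form of J
  have hsymJ : ∀ a b : Fin d → ℝ, a ⬝ᵥ J *ᵥ b = b ⬝ᵥ J *ᵥ a := by
    intro a b
    calc a ⬝ᵥ J *ᵥ b = (a ᵥ* J) ⬝ᵥ b := dotProduct_mulVec _ _ _
      _ = (Jᵀ *ᵥ a) ⬝ᵥ b := by rw [mulVec_transpose]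
      _ = (J *ᵥ a) ⬝ᵥ b := by rw [hJsymm]
      _ = b ⬝ᵥ (J *ᵥ a) := dotProduct_comm _ _
  -- quadratic form bounds from the PSD hypotheses
  have hlow' : ∀ z : Fin d → ℝ, δ * (z ⬝ᵥ z) ≤ z ⬝ᵥ J *ᵥ z := by
    intro z
    have h0 := hJlow.dotProduct_mulVec_nonneg z
    simp only [star_trivial, sub_mulVec, smul_mulVec, one_mulVec, dotProduct_sub,
      dotProduct_smul, smul_eq_mul] at h0
    linarith
  have hhigh' : ∀ z : Fin d → ℝ, z ⬝ᵥ J *ᵥ z ≤ (1 - δ) * (z ⬝ᵥ z) := by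
    intro z
    have h0 := hJhigh.dotProduct_mulVec_nonneg z
    simp only [star_trivial, sub_mulVec, smul_mulVec, one_mulVec, dotProduct_sub,
      dotProduct_smul, smul_eq_mul] at h0
    linarith
  have hpsdJ : ∀ z : Fin d → ℝ, 0 ≤ z ⬝ᵥ J *ᵥ z := by
    intro z
    have h1 := hlow' z
    have h2 : 0 ≤ z ⬝ᵥ z := Finset.sum_nonneg fun i _ => mul_self_nonneg _
    nlinarith
  -- J is invertible
  have hherm : J.IsHermitian := by
    ext i j
    simpa using congrFun (congrFun hJsymm i) j
  have hposdef : J.PosDef := by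
    refine Matrix.PosDef.of_dotProduct_mulVec_pos hherm fun z hz => ?_
    simp only [star_trivial]
    have h1 := hlow' z
    have h2 : 0 < z ⬝ᵥ z := by
      rcases lt_or_eq_of_le (Finset.sum_nonneg fun i _ => mul_self_nonneg (z i) :
        (0 : ℝ) ≤ z ⬝ᵥ z) with h | h
      · exact h
      · exact absurd (dotProduct_self_eq_zero.mp h.symm) hz
    nlinarith
  have hunit : IsUnit J.det := hposdef.det_pos.ne'.isUnit
  set u := J⁻¹ *ᵥ v with hudef
  have hJu : J *ᵥ u = v := by
    rw [hudef, mulVec_mulVec, Matrix.mul_nonsing_inv J hunit, one_mulVec]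
  have hQ1 : Q = u ⬝ᵥ v := by rw [hQdef, hudef, dotProduct_comm]
  have hQ2 : Q = u ⬝ᵥ J *ᵥ u := by rw [hQ1, hJu]
  have hQ0 : 0 ≤ Q := hQ2 ▸ hpsdJ u
  have huJv : u ⬝ᵥ J *ᵥ v = P := by
    rw [hsymJ u v, hJu, hPdef]
  -- Cauchy-Schwarz instances
  have hcsJ := cs_psd J hsymJ hpsdJ u v
  rw [huJv, ← hQ2] at hcsJ
  -- hcsJ : P ^ 2 ≤ Q * (v ⬝ᵥ J *ᵥ v)
  have hvJv := hhigh' v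
  rw [← hPdef] at hvJv
  have hcsId : Q ^ 2 ≤ (u ⬝ᵥ u) * P := by
    have h0 := cs_psd (1 : Matrix (Fin d) (Fin d) ℝ)
      (fun a b => by rw [one_mulVec, one_mulVec, dotProduct_comm])
      (fun z => by rw [one_mulVec]; exact Finset.sum_nonneg fun i _ => mul_self_nonneg _) u v
    simp only [one_mulVec] at h0
    rw [← hQ1, ← hPdef] at h0
    exact h0
  have hu2 : δ * (u ⬝ᵥ u) ≤ Q := by
    have h0 := hlow' u
    rw [← hQ2] at h0
    exact h0
  have huu0 : 0 ≤ u ⬝ᵥ u := Finset.sum_nonneg fun i _ => mul_self_nonneg _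
  have hQP : Q ≤ P / δ := by
    rcases lt_or_eq_of_le hQ0 with hQpos | hQzero
    · rw [le_div_iff₀ hδ0]
      nlinarith [hcsId, hu2, huu0, hP0, hQpos, mul_le_mul_of_nonneg_right hu2 hP0]
    · rw [← hQzero]
      exact div_nonneg hP0 hδ0.le
  constructor
  · -- lower bound
    by_cases hv : v = 0
    · have hQz : Q = 0 := by rw [hQ1, hv, dotProduct_zero]
      have hPz : P = 0 := by rw [hPdef, hv, zero_dotProduct]
      have hSz : S = 0 := le_antisymm (by linarith [hSP, hPz.le]) hS0
      rw [hQz, hSz, hPz]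
      simp
    · have hPne : P ≠ 0 := by
        rw [hPdef]
        exact fun hh => hv (dotProduct_self_eq_zero.mp hh)
      have hPpos : 0 < P := lt_of_le_of_ne hP0 (Ne.symm hPne)
      have hkey : P ≤ Q * (1 - δ) := by
        nlinarith [hcsJ, hvJv, hQ0, hPpos]
      rw [div_mul_eq_mul_div, div_le_iff₀ h1δ]
      nlinarith [hkey, hSP, hS0, h1δ]
  · -- upper bound
    calc Q - S ≤ Q := by linarith
      _ ≤ P / δ := hQP
      _ = (1 / δ) * P := by ring
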